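/- (Lemma 1, first inclusion.) Suppose Assumption A1 holds for g, and suppose the base set D satisfies Z*_{t',s} ⊆ D for every t' ≥ s. Then, for every choice of the families Future_{t,s} and Past_s and every t ≥ s, the exact living set is contained in the recursively maintained set: Z*_{t,s} ⊆ Z_{t,s}. -/

import Mathlib

/-- The functional cost of candidate change `s` at time `t`, evaluated at mean `μ`:
`f̃_{t,s}(μ) = F(s) + Σ_{i=s+1}^{t} (y i − μ)² + α − β·g(t−s)`. -/
noncomputable def ftilde (y F : ℕ → ℝ) (α β : ℝ) (g : ℕ → ℝ) (t s : ℕ) (μ : ℝ) : ℝ :=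
  F s + ∑ i ∈ Finset.Icc (s + 1) t, (y i - μ) ^ 2 + α - β * g (t - s)

/-- `I_{t,s,s'}`: the set of means on which change `s` beats change `s'` at time `t`. -/
def Iset (y F : ℕ → ℝ) (α β : ℝ) (g : ℕ → ℝ) (t s s' : ℕ) : Set ℝ :=
  {μ : ℝ | ftilde y F α β g t s μ ≤ ftilde y F α β g t s' μ}

/-- `I_{∞,s,s'}`: the limiting comparison set as `t → ∞`. -/
def Iinf (y F : ℕ → ℝ) (s s' : ℕ) : Set ℝ :=
  {μ : ℝ | F s - F s' + ∑ i ∈ Finset.Icc (s + 1) s', (y i - μ) ^ 2 ≤ 0}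

/-- `Z*_{t,s}`: the exact living set of change `s` at time `t` (ties between equal
costs are assigned to the older change). -/
noncomputable def Zstar (y F : ℕ → ℝ) (α β : ℝ) (g : ℕ → ℝ) (t s : ℕ) : Set ℝ :=
  {μ : ℝ | (∀ s'' : ℕ, s'' < s → ftilde y F α β g t s μ < ftilde y F α β g t s'' μ) ∧
           (∀ s' : ℕ, s < s' → s' ≤ t → ftilde y F α β g t s μ ≤ ftilde y F α β g t s' μ)}

/-! The cost gap `f̃_{t,s} − f̃_{t,s'}` between two changes `s < s'` is the `t`-independent quantity
defining `I_{∞,s,s'}` plus `β · (g(t−s') − g(t−s))`, and by A1 this penalty term increases to `0`.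
Hence beating a newer change at a late time implies beating it at every earlier time, and a point
of `Z*_{t,s}`, which strictly beats every older change `s''`, never lies in `I_{∞,s'',s}`. So an
induction on `t` shows the stronger invariant `Z*_{t',s} ⊆ Z_{t,s}` for all `t' ≥ t`. -/

section CostGap

variable (y F : ℕ → ℝ) (α β : ℝ) (g : ℕ → ℝ)

lemma ftilde_sub_ftilde {t s s' : ℕ} (hss' : s ≤ s') (hs't : s' ≤ t) (μ : ℝ) :
    ftilde y F α β g t s μ - ftilde y F α β g t s' μ
      = (F s - F s' + ∑ i ∈ Finset.Icc (s + 1) s', (y i - μ) ^ 2)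
        + β * (g (t - s') - g (t - s)) := by
  have hsplit : ∑ i ∈ Finset.Icc (s + 1) s', (y i - μ) ^ 2
      + ∑ i ∈ Finset.Icc (s' + 1) t, (y i - μ) ^ 2
      = ∑ i ∈ Finset.Icc (s + 1) t, (y i - μ) ^ 2 := by
    simp only [Finset.Icc_add_one_left_eq_Ioc]
    exact Finset.sum_Ioc_consecutive _ hss' hs't
  unfold ftilde
  linarith

variable {y F α β g}

lemma ftilde_sub_ftilde_mono (hβ : 0 ≤ β) {s s' t₁ t₂ : ℕ}
    (hg : g (t₁ - s') - g (t₁ - s) ≤ g (t₂ - s') - g (t₂ - s))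
    (hss' : s ≤ s') (hs't₁ : s' ≤ t₁) (ht : t₁ ≤ t₂) (μ : ℝ) :
    ftilde y F α β g t₁ s μ - ftilde y F α β g t₁ s' μ
      ≤ ftilde y F α β g t₂ s μ - ftilde y F α β g t₂ s' μ := by
  rw [ftilde_sub_ftilde y F α β g hss' hs't₁, ftilde_sub_ftilde y F α β g hss' (hs't₁.trans ht)]
  gcongr _ + β * ?_

lemma Iset_subset_Iset (hβ : 0 ≤ β) {s s' t₁ t₂ : ℕ}
    (hg : g (t₁ - s') - g (t₁ - s) ≤ g (t₂ - s') - g (t₂ - s))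
    (hss' : s ≤ s') (hs't₁ : s' ≤ t₁) (ht : t₁ ≤ t₂) :
    Iset y F α β g t₂ s s' ⊆ Iset y F α β g t₁ s s' := fun μ hμ => by
  have := ftilde_sub_ftilde_mono (y := y) (F := F) (α := α) hβ hg hss' hs't₁ ht μ
  simp only [Iset, Set.mem_ofPred_eq] at hμ ⊢
  linarith

lemma ftilde_sub_ftilde_le_of_tendsto (hβ : 0 ≤ β) {s s' t : ℕ}
    (hmono : ∀ t₁ t₂ : ℕ, s' < t₁ → t₁ ≤ t₂ →
      g (t₁ - s') - g (t₁ - s) ≤ g (t₂ - s') - g (t₂ - s))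
    (hlim : Filter.Tendsto (fun t : ℕ => g (t - s') - g (t - s)) Filter.atTop (nhds 0))
    (hss' : s ≤ s') (hs't : s' < t) (μ : ℝ) :
    ftilde y F α β g t s μ - ftilde y F α β g t s' μ
      ≤ F s - F s' + ∑ i ∈ Finset.Icc (s + 1) s', (y i - μ) ^ 2 := by
  have hgap : g (t - s') - g (t - s) ≤ 0 :=
    ge_of_tendsto hlim <| Filter.eventually_atTop.2 ⟨t, fun t₂ ht => hmono t t₂ hs't ht⟩
  have := mul_nonpos_of_nonneg_of_nonpos hβ hgap
  rw [ftilde_sub_ftilde y F α β g hss' hs't.le]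
  linarith

lemma notMem_Iinf_of_mem_Zstar (hβ : 0 ≤ β) {s'' s t : ℕ}
    (hmono : ∀ t₁ t₂ : ℕ, s < t₁ → t₁ ≤ t₂ →
      g (t₁ - s) - g (t₁ - s'') ≤ g (t₂ - s) - g (t₂ - s''))
    (hlim : Filter.Tendsto (fun t : ℕ => g (t - s) - g (t - s'')) Filter.atTop (nhds 0))
    (hs''s : s'' < s) (hst : s < t) {μ : ℝ} (hμ : μ ∈ Zstar y F α β g t s) :
    μ ∉ Iinf y F s'' s := fun hinf => by
  have := ftilde_sub_ftilde_le_of_tendsto (y := y) (F := F) (α := α) hβ hmono hlim hs''s.le hst μ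
  have := hμ.1 s'' hs''s
  simp only [Iinf, Set.mem_ofPred_eq] at hinf
  linarith

end CostGap

/-- Lemma 1, first inclusion: under Assumption A1, if the base set `D`
contains every exact living set `Z*_{t',s}` for `t' ≥ s`, then for any choice of the
families `Future_{t,s}` and `Past_s`, the recursively maintained set `Z_{t,s}` given by
`Z_{s,s} = D` and
`Z_{t+1,s} = (Z_{t,s} ∩ ⋂_{s' ∈ Future_{t,s}} I_{t+1,s,s'}) \ ⋃_{s'' ∈ Past_s} I_{∞,s'',s}`
contains the exact living set: `Z*_{t,s} ⊆ Z_{t,s}` for all `t ≥ s`. -/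
theorem Zstar_subset_Z (y F : ℕ → ℝ) (α β : ℝ) (hβ : 0 ≤ β) (g : ℕ → ℝ)
    (hA1 : ∀ s s' : ℕ, s < s' →
      (∀ t₁ t₂ : ℕ, s' < t₁ → t₁ ≤ t₂ →
        g (t₁ - s') - g (t₁ - s) ≤ g (t₂ - s') - g (t₂ - s)) ∧
      Filter.Tendsto (fun t : ℕ => g (t - s') - g (t - s)) Filter.atTop (nhds 0))
    (s : ℕ) (D : Set ℝ) (hD : ∀ t' : ℕ, s ≤ t' → Zstar y F α β g t' s ⊆ D)
    (Future : ℕ → Set ℕ) (hFuture : ∀ t : ℕ, s ≤ t → Future t ⊆ Set.Icc (s + 1) t)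
    (Past : Set ℕ) (hPast : Past ⊆ Set.Iio s)
    (Z : ℕ → Set ℝ) (hZs : Z s = D)
    (hZrec : ∀ t : ℕ, s ≤ t →
      Z (t + 1) =
        (Z t ∩ ⋂ s' ∈ Future t, Iset y F α β g (t + 1) s s') \
          ⋃ s'' ∈ Past, Iinf y F s'' s) :
    ∀ t : ℕ, s ≤ t → Zstar y F α β g t s ⊆ Z t := by
  have key : ∀ t, s ≤ t → ∀ t', t ≤ t' → Zstar y F α β g t' s ⊆ Z t := by
    intro t hst
    induction t, hst using Nat.le_induction with
    | base => exact fun t' ht' => hZs ▸ hD t' ht'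
    | succ t hst ih =>
      intro t' ht' μ hμ
      rw [hZrec t hst]
      refine ⟨⟨ih t' (by omega) hμ, Set.mem_iInter₂.2 fun s' hs' => ?_⟩, ?_⟩
      · obtain ⟨hss', hs't⟩ := hFuture t hst hs'
        exact Iset_subset_Iset hβ ((hA1 s s' hss').1 (t + 1) t' (by omega) ht') (by omega)
          (by omega) ht' (hμ.2 s' hss' (by omega))
      · simp only [Set.mem_iUnion₂, not_exists]
        intro s'' hs''
        have hs''s : s'' < s := hPast hs''
        exact notMem_Iinf_of_mem_Zstar hβ (hA1 s'' s hs''s).1 (hA1 s'' s hs''s).2 hs''s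
          (by omega) hμ
  exact fun t hst => key t hst t le_rfl
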